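/- (Theorem 5.2, finite termination of PTBiCOR) Let M₀ = I₁·I₂·⋯·I_N. Suppose the PTBiCOR sequences with D̃ = M(D) are defined for n = 0,…,M₀ and that ⟨R_n*, L̃(R_n)⟩ ≠ 0 and ⟨L̃^T(P_n*), L̃(P_n)⟩ ≠ 0 for n = 0,…,M₀−1 (no breakdown). Then R_{M₀} = 0; consequently L̃(X_{M₀}) = M(D) and, since M is invertible, L(X_{M₀}) = D, i.e., X_{M₀} is an exact solution of the Sylvester tensor equation. In particular, PTBiCOR converges to an exact solution in at most M₀ iteration steps. -/

import Mathlib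

open scoped Matrix

/-- A tensor in `ℝ^{I₁ × ⋯ × I_N}`: a real-valued function on multi-indices. -/
abbrev Tensor {N : ℕ} (I : Fin N → ℕ) := (∀ n, Fin (I n)) → ℝ

/-- Inner product `⟨X, Y⟩ = ∑ᵢ X(i) Y(i)`. -/
noncomputable def tinner {N : ℕ} {I : Fin N → ℕ} (X Y : Tensor I) : ℝ :=
  ∑ i : ∀ n, Fin (I n), X i * Y i

/-- Norm `‖X‖ = ⟨X, X⟩^{1/2}`. -/
noncomputable def tnorm {N : ℕ} {I : Fin N → ℕ} (X : Tensor I) : ℝ :=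
  Real.sqrt (tinner X X)

/-- The Sylvester operator `L(X) = X ×₁ A₁ + ⋯ + X ×_N A_N`. -/
noncomputable def sylvOp {N : ℕ} {I : Fin N → ℕ}
    (A : ∀ n, Matrix (Fin (I n)) (Fin (I n)) ℝ) (X : Tensor I) : Tensor I :=
  fun i => ∑ n : Fin N, ∑ j : Fin (I n), A n (i n) j * X (Function.update i n j)

/-- The transposed Sylvester operator `L^T`, with each `Aₙ` replaced by `Aₙᵀ`. -/
noncomputable def sylvOpT {N : ℕ} {I : Fin N → ℕ}
    (A : ∀ n, Matrix (Fin (I n)) (Fin (I n)) ℝ) : Tensor I → Tensor I :=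
  sylvOp (fun n => (A n)ᵀ)

/-- The NKP preconditioning operator
`M(X) = X ×₁ Q_N⁻¹ ×₂ Q_{N-1}⁻¹ ⋯ ×_N Q₁⁻¹`; here `Q n` denotes the matrix
`Q_{N+1-n} ∈ ℝ^{Iₙ × Iₙ}` acting on mode `n`. -/
noncomputable def precondOp {N : ℕ} {I : Fin N → ℕ}
    (Q : ∀ n, Matrix (Fin (I n)) (Fin (I n)) ℝ) (X : Tensor I) : Tensor I :=
  fun i => ∑ j : ∀ n, Fin (I n), (∏ n, (Q n)⁻¹ (i n) (j n)) * X j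

/-- The transposed preconditioning operator `M^T`, with each inverse replaced
by its transpose. -/
noncomputable def precondOpT {N : ℕ} {I : Fin N → ℕ}
    (Q : ∀ n, Matrix (Fin (I n)) (Fin (I n)) ℝ) (X : Tensor I) : Tensor I :=
  fun i => ∑ j : ∀ n, Fin (I n), (∏ n, ((Q n)⁻¹)ᵀ (i n) (j n)) * X j

/-- The (T)BiCOR sequences, defined for `n = 0,…,k`, for abstract operators
`Lop` (the Sylvester operator, possibly preconditioned) and `LopT` (its transpose). -/
structure BiCORSeq {N : ℕ} {I : Fin N → ℕ}
    (Lop LopT : Tensor I → Tensor I) (D X0 : Tensor I) (k : ℕ) where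
  X : ℕ → Tensor I
  R : ℕ → Tensor I
  Rs : ℕ → Tensor I
  P : ℕ → Tensor I
  Ps : ℕ → Tensor I
  a : ℕ → ℝ
  b : ℕ → ℝ
  hX0 : X 0 = X0
  hR0 : R 0 = D - Lop X0
  hRs0 : Rs 0 = Lop (R 0)
  hP0 : P 0 = R 0
  hPs0 : Ps 0 = Rs 0
  ha : ∀ n, n < k →
    a n = tinner (Rs n) (Lop (R n)) / tinner (LopT (Ps n)) (Lop (P n))
  hX : ∀ n, n < k → X (n + 1) = X n + a n • P n
  hR : ∀ n, n < k → R (n + 1) = R n - a n • Lop (P n)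
  hRs : ∀ n, n < k → Rs (n + 1) = Rs n - a n • LopT (Ps n)
  hb : ∀ n, n < k →
    b n = tinner (Rs (n + 1)) (Lop (R (n + 1))) / tinner (Rs n) (Lop (R n))
  hP : ∀ n, n < k → P (n + 1) = R (n + 1) + b n • P n
  hPs : ∀ n, n < k → Ps (n + 1) = Rs (n + 1) + b n • Ps n

section Aux

variable {N : ℕ} {I : Fin N → ℕ}

/-! ### Bilinearity of `tinner` -/

lemma tinner_add_left' (X Y Z : Tensor I) :
    tinner (X + Y) Z = tinner X Z + tinner Y Z := by
  simp [tinner, add_mul, Finset.sum_add_distrib]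

lemma tinner_sub_left' (X Y Z : Tensor I) :
    tinner (X - Y) Z = tinner X Z - tinner Y Z := by
  simp [tinner, sub_mul, Finset.sum_sub_distrib]

lemma tinner_smul_left' (c : ℝ) (X Z : Tensor I) :
    tinner (c • X) Z = c * tinner X Z := by
  simp [tinner, Finset.mul_sum, mul_assoc]

lemma tinner_add_right' (X Y Z : Tensor I) :
    tinner Z (X + Y) = tinner Z X + tinner Z Y := by
  simp [tinner, mul_add, Finset.sum_add_distrib]

lemma tinner_sub_right' (X Y Z : Tensor I) :
    tinner Z (X - Y) = tinner Z X - tinner Z Y := by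
  simp [tinner, mul_sub, Finset.sum_sub_distrib]

lemma tinner_smul_right' (c : ℝ) (X Z : Tensor I) :
    tinner Z (c • X) = c * tinner Z X := by
  simp only [tinner, Pi.smul_apply, smul_eq_mul, Finset.mul_sum]
  exact Finset.sum_congr rfl fun i _ => by ring

lemma tinner_sum_left' {ι : Type*} (s : Finset ι) (f : ι → Tensor I) (Z : Tensor I) :
    tinner (∑ i ∈ s, f i) Z = ∑ i ∈ s, tinner (f i) Z := by
  simp only [tinner, Finset.sum_apply, Finset.sum_mul]
  rw [Finset.sum_comm]

lemma tinner_self_eq_zero' {X : Tensor I} (h : tinner X X = 0) : X = 0 := by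
  funext i
  have h2 : ∀ j ∈ Finset.univ, (0:ℝ) ≤ X j * X j := fun j _ => mul_self_nonneg _
  have h3 := (Finset.sum_eq_zero_iff_of_nonneg h2).mp h i (Finset.mem_univ i)
  simpa using mul_self_eq_zero.mp h3

/-! ### Linearity of the operators -/

lemma sylvOp_sub' (A : ∀ n, Matrix (Fin (I n)) (Fin (I n)) ℝ) (X Y : Tensor I) :
    sylvOp A (X - Y) = sylvOp A X - sylvOp A Y := by
  funext i; simp [sylvOp, mul_sub, Finset.sum_sub_distrib]

lemma sylvOp_add' (A : ∀ n, Matrix (Fin (I n)) (Fin (I n)) ℝ) (X Y : Tensor I) :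
    sylvOp A (X + Y) = sylvOp A X + sylvOp A Y := by
  funext i; simp [sylvOp, mul_add, Finset.sum_add_distrib]

lemma sylvOp_smul' (A : ∀ n, Matrix (Fin (I n)) (Fin (I n)) ℝ) (c : ℝ) (X : Tensor I) :
    sylvOp A (c • X) = c • sylvOp A X := by
  funext i
  simp only [sylvOp, Pi.smul_apply, smul_eq_mul, Finset.mul_sum]
  exact Finset.sum_congr rfl fun n _ => Finset.sum_congr rfl fun j _ => by ring

lemma precondOp_sub' (Q : ∀ n, Matrix (Fin (I n)) (Fin (I n)) ℝ) (X Y : Tensor I) :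
    precondOp Q (X - Y) = precondOp Q X - precondOp Q Y := by
  funext i; simp [precondOp, mul_sub, Finset.sum_sub_distrib]

lemma precondOp_add' (Q : ∀ n, Matrix (Fin (I n)) (Fin (I n)) ℝ) (X Y : Tensor I) :
    precondOp Q (X + Y) = precondOp Q X + precondOp Q Y := by
  funext i; simp [precondOp, mul_add, Finset.sum_add_distrib]

lemma precondOp_smul' (Q : ∀ n, Matrix (Fin (I n)) (Fin (I n)) ℝ) (c : ℝ) (X : Tensor I) :
    precondOp Q (c • X) = c • precondOp Q X := by
  funext i
  simp only [precondOp, Pi.smul_apply, smul_eq_mul, Finset.mul_sum]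
  exact Finset.sum_congr rfl fun j _ => by ring

lemma precondOpT_sub' (Q : ∀ n, Matrix (Fin (I n)) (Fin (I n)) ℝ) (X Y : Tensor I) :
    precondOpT Q (X - Y) = precondOpT Q X - precondOpT Q Y := by
  funext i; simp [precondOpT, mul_sub, Finset.sum_sub_distrib]

lemma precondOpT_add' (Q : ∀ n, Matrix (Fin (I n)) (Fin (I n)) ℝ) (X Y : Tensor I) :
    precondOpT Q (X + Y) = precondOpT Q X + precondOpT Q Y := by
  funext i; simp [precondOpT, mul_add, Finset.sum_add_distrib]

lemma precondOpT_smul' (Q : ∀ n, Matrix (Fin (I n)) (Fin (I n)) ℝ) (c : ℝ) (X : Tensor I) :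
    precondOpT Q (c • X) = c • precondOpT Q X := by
  funext i
  simp only [precondOpT, Pi.smul_apply, smul_eq_mul, Finset.mul_sum]
  exact Finset.sum_congr rfl fun j _ => by ring

/-! ### Adjointness -/

/-- The swap equivalence used for the Sylvester adjoint. -/
def modeSwap (I : Fin N → ℕ) (n : Fin N) :
    ((∀ m, Fin (I m)) × Fin (I n)) ≃ ((∀ m, Fin (I m)) × Fin (I n)) where
  toFun p := (Function.update p.1 n p.2, p.1 n)
  invFun p := (Function.update p.1 n p.2, p.1 n)
  left_inv p := by
    simp [Function.update_idem, Function.update_self, Function.update_eq_self]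
  right_inv p := by
    simp [Function.update_idem, Function.update_self, Function.update_eq_self]

lemma tinner_sylvOpT' (A : ∀ n, Matrix (Fin (I n)) (Fin (I n)) ℝ) (X Y : Tensor I) :
    tinner (sylvOpT A X) Y = tinner X (sylvOp A Y) := by
  simp only [tinner, sylvOpT, sylvOp, Finset.sum_mul, Finset.mul_sum]
  rw [Finset.sum_comm]
  conv_rhs => rw [Finset.sum_comm]
  refine Finset.sum_congr rfl fun n _ => ?_
  rw [← Fintype.sum_prod_type', ← Fintype.sum_prod_type']
  refine Fintype.sum_equiv (modeSwap I n) _ _ fun p => ?_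
  simp [modeSwap, Matrix.transpose_apply, Function.update_idem,
    Function.update_self, Function.update_eq_self]
  ring

lemma tinner_precondOpT' (Q : ∀ n, Matrix (Fin (I n)) (Fin (I n)) ℝ) (X Y : Tensor I) :
    tinner (precondOpT Q X) Y = tinner X (precondOp Q Y) := by
  simp only [tinner, precondOpT, precondOp, Finset.sum_mul, Finset.mul_sum]
  rw [Finset.sum_comm]
  refine Finset.sum_congr rfl fun j _ => Finset.sum_congr rfl fun i _ => ?_
  simp only [Matrix.transpose_apply]
  ring

/-! ### Injectivity of the preconditioner -/

lemma precondOp_injective (Q : ∀ n, Matrix (Fin (I n)) (Fin (I n)) ℝ)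
    (hQ : ∀ n, IsUnit (Q n).det) {X Y : Tensor I}
    (h : precondOp Q X = precondOp Q Y) : X = Y := by
  classical
  have key : ∀ Z : Tensor I, ∀ i : ∀ n, Fin (I n),
      (∑ j : ∀ n, Fin (I n), (∏ n, Q n (i n) (j n)) * precondOp Q Z j) = Z i := by
    intro Z i
    simp only [precondOp, Finset.mul_sum]
    rw [Finset.sum_comm]
    have step : ∀ l : ∀ n, Fin (I n),
        (∑ j : ∀ n, Fin (I n),
          (∏ n, Q n (i n) (j n)) * ((∏ n, (Q n)⁻¹ (j n) (l n)) * Z l))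
        = (if i = l then (1:ℝ) else 0) * Z l := by
      intro l
      have e1 : ∀ j : ∀ n, Fin (I n),
          (∏ n, Q n (i n) (j n)) * ((∏ n, (Q n)⁻¹ (j n) (l n)) * Z l)
          = (∏ n, Q n (i n) (j n) * (Q n)⁻¹ (j n) (l n)) * Z l := by
        intro j; rw [← mul_assoc, ← Finset.prod_mul_distrib]
      rw [Finset.sum_congr rfl (fun j _ => e1 j), ← Finset.sum_mul]
      congr 1
      rw [← Fintype.prod_sum (fun n t => Q n (i n) t * (Q n)⁻¹ t (l n))]
      have e2 : ∀ n : Fin N, (∑ t, Q n (i n) t * (Q n)⁻¹ t (l n))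
          = if i n = l n then (1:ℝ) else 0 := by
        intro n
        rw [← Matrix.mul_apply, Matrix.mul_nonsing_inv (Q n) (hQ n), Matrix.one_apply]
      rw [Finset.prod_congr rfl (fun n _ => e2 n)]
      by_cases hil : i = l
      · subst hil; simp
      · obtain ⟨n, hn⟩ := Function.ne_iff.mp hil
        rw [if_neg hil]
        exact Finset.prod_eq_zero (Finset.mem_univ n) (if_neg hn)
    rw [Finset.sum_congr rfl (fun l _ => step l)]
    simp
  funext i
  rw [← key X i, ← key Y i, h]

/-! ### The arithmetic core of the bi-orthogonality induction -/

lemma bicor_arith (F C W V : ℕ → ℕ → ℝ) (a b : ℕ → ℝ) (k : ℕ)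
    (h1 : ∀ i j, j < k → F i (j+1) = F i j - a j * W i j)
    (h2 : ∀ i j, i < k → F (i+1) j = F i j - a i * V i j)
    (h3 : ∀ j, W 0 j = C 0 j)
    (h4 : ∀ i j, i < k → W (i+1) j = C (i+1) j - b i * C i j)
    (h5 : ∀ i, V i 0 = C i 0)
    (h6 : ∀ i j, j < k → V i (j+1) = C i (j+1) - b j * C i j)
    (h9 : ∀ n, n < k → a n * C n n = F n n)
    (h10 : ∀ n, n < k → F (n+1) (n+1) = b n * F n n)
    (h11 : ∀ n, n < k → a n ≠ 0) :
    ∀ m, m ≤ k → ∀ i j, i ≤ m → j ≤ m → i ≠ j → F i j = 0 ∧ C i j = 0 := by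
  have h7 : ∀ i j, i < k → V i j = (a i)⁻¹ * (F i j - F (i+1) j) := by
    intro i j hik
    rw [h2 i j hik, inv_mul_eq_div, eq_div_iff (h11 i hik)]; ring
  have h8 : ∀ i j, j < k → W i j = (a j)⁻¹ * (F i j - F i (j+1)) := by
    intro i j hjk
    rw [h1 i j hjk, inv_mul_eq_div, eq_div_iff (h11 j hjk)]; ring
  intro m
  induction m with
  | zero => intro _ i j hi hj hij; omega
  | succ m IH =>
    intro hmk i j hix hjx hij
    have hm : m < k := Nat.lt_of_lt_of_le (Nat.lt_succ_self m) hmk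
    have IH' := IH (le_of_lt hm)
    have HF : ∀ i j, i ≤ m → j ≤ m → i ≠ j → F i j = 0 :=
      fun i j p q r => (IH' i j p q r).1
    have HC : ∀ i j, i ≤ m → j ≤ m → i ≠ j → C i j = 0 :=
      fun i j p q r => (IH' i j p q r).2
    have hWm : ∀ i, i ≤ m → W i m = if i = m then C m m else 0 := by
      intro i him
      cases i with
      | zero =>
        rw [h3]
        split_ifs with h
        · rw [← h]
        · exact HC 0 m (Nat.zero_le m) le_rfl h
      | succ i' =>
        have hi'k : i' < k := by omega
        rw [h4 i' m hi'k]
        split_ifs with h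
        · rw [HC i' m (by omega) le_rfl (by omega), h]; ring
        · rw [HC (i'+1) m him le_rfl h, HC i' m (by omega) le_rfl (by omega)]; ring
    have hVm : ∀ j, j ≤ m → V m j = if j = m then C m m else 0 := by
      intro j hjm
      cases j with
      | zero =>
        rw [h5]
        split_ifs with h
        · rw [← h]
        · exact HC m 0 le_rfl (Nat.zero_le m) (by omega)
      | succ j' =>
        have hj'k : j' < k := by omega
        rw [h6 m j' hj'k]
        split_ifs with h
        · rw [HC m j' le_rfl (by omega) (by omega), h]; ring
        · rw [HC m (j'+1) le_rfl hjm (by omega), HC m j' le_rfl (by omega) (by omega)]; ring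
    have Fnew1 : ∀ i, i ≤ m → F i (m+1) = 0 := by
      intro i him
      rw [h1 i m hm, hWm i him]
      split_ifs with h
      · rw [h, ← h9 m hm]; ring
      · rw [HF i m him le_rfl h]; ring
    have Fnew2 : ∀ j, j ≤ m → F (m+1) j = 0 := by
      intro j hjm
      rw [h2 m j hm, hVm j hjm]
      split_ifs with h
      · rw [h, ← h9 m hm]; ring
      · rw [HF m j le_rfl hjm (Ne.symm h)]; ring
    have diag : (a m)⁻¹ * (0 - F (m+1) (m+1)) + b m * C m m = 0 := by
      have ham := h11 m hm
      rw [h10 m hm, ← h9 m hm]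
      field_simp
      ring
    have Cnew2 : ∀ j, j ≤ m → C (m+1) j = 0 := by
      intro j hjm
      have hjk : j < k := by omega
      have e : C (m+1) j = W (m+1) j + b m * C m j := by rw [h4 m j hm]; ring
      rw [e, h8 (m+1) j hjk]
      by_cases h : j = m
      · rw [h, Fnew2 m le_rfl]
        exact diag
      · rw [Fnew2 j hjm, Fnew2 (j+1) (by omega), HC m j le_rfl hjm (Ne.symm h)]; ring
    have Cnew1 : ∀ i, i ≤ m → C i (m+1) = 0 := by
      intro i him
      have hik : i < k := by omega
      have e : C i (m+1) = V i (m+1) + b m * C i m := by rw [h6 i m hm]; ring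
      rw [e, h7 i (m+1) hik]
      by_cases h : i = m
      · rw [h, Fnew1 m le_rfl]
        exact diag
      · rw [Fnew1 i him, Fnew1 (i+1) (by omega), HC i m him le_rfl h]; ring
    rcases Nat.lt_or_ge i (m+1) with hi' | hi'
    · rcases Nat.lt_or_ge j (m+1) with hj' | hj'
      · exact IH' i j (by omega) (by omega) hij
      · have hj2 : j = m + 1 := by omega
        subst hj2
        exact ⟨Fnew1 i (by omega), Cnew1 i (by omega)⟩
    · have hi2 : i = m + 1 := by omega
      subst hi2
      exact ⟨Fnew2 j (by omega), Cnew2 j (by omega)⟩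

end Aux

/-- Theorem 5.2, finite termination of PTBiCOR: with
`M₀ = I₁ ⋯ I_N`, `D̃ = M(D)`, and no breakdown for `n = 0,…,M₀-1`, the residual
`R_{M₀} = 0`; consequently `L̃(X_{M₀}) = M(D)` and, since `M` is invertible,
`L(X_{M₀}) = D`. -/
theorem ptbicor_finite_termination {N : ℕ} (hN : 1 ≤ N) (I : Fin N → ℕ)
    (hI : ∀ n, 0 < I n)
    (A : ∀ n, Matrix (Fin (I n)) (Fin (I n)) ℝ)
    (Q : ∀ n, Matrix (Fin (I n)) (Fin (I n)) ℝ)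
    (hQ : ∀ n, IsUnit (Q n).det)
    (D X0 : Tensor I) (M0 : ℕ) (hM0 : M0 = ∏ n, I n)
    (T : BiCORSeq (precondOp Q ∘ sylvOp A) (sylvOpT A ∘ precondOpT Q)
      (precondOp Q D) X0 M0)
    (hnb1 : ∀ n, n < M0 →
      tinner (T.Rs n) ((precondOp Q ∘ sylvOp A) (T.R n)) ≠ 0)
    (hnb2 : ∀ n, n < M0 →
      tinner ((sylvOpT A ∘ precondOpT Q) (T.Ps n))
        ((precondOp Q ∘ sylvOp A) (T.P n)) ≠ 0) :
    T.R M0 = 0 ∧ precondOp Q (sylvOp A (T.X M0)) = precondOp Q D ∧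
      sylvOp A (T.X M0) = D := by
  classical
  -- linearity of the preconditioned operators
  have hLsub : ∀ (c : ℝ) (x y : Tensor I),
      (precondOp Q ∘ sylvOp A) (x - c • y)
        = (precondOp Q ∘ sylvOp A) x - c • (precondOp Q ∘ sylvOp A) y := by
    intro c x y
    simp only [Function.comp_apply, sylvOp_sub', sylvOp_smul', precondOp_sub',
      precondOp_smul']
  have hLadd : ∀ (c : ℝ) (x y : Tensor I),
      (precondOp Q ∘ sylvOp A) (x + c • y)
        = (precondOp Q ∘ sylvOp A) x + c • (precondOp Q ∘ sylvOp A) y := by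
    intro c x y
    simp only [Function.comp_apply, sylvOp_add', sylvOp_smul', precondOp_add',
      precondOp_smul']
  have hTadd : ∀ (c : ℝ) (x y : Tensor I),
      (sylvOpT A ∘ precondOpT Q) (x + c • y)
        = (sylvOpT A ∘ precondOpT Q) x + c • (sylvOpT A ∘ precondOpT Q) y := by
    intro c x y
    simp only [Function.comp_apply, sylvOpT, precondOpT_add', precondOpT_smul',
      sylvOp_add', sylvOp_smul']
  -- adjointness
  have hadj : ∀ x y : Tensor I,
      tinner ((sylvOpT A ∘ precondOpT Q) x) y
        = tinner x ((precondOp Q ∘ sylvOp A) y) := by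
    intro x y
    calc tinner (sylvOpT A (precondOpT Q x)) y
        = tinner (precondOpT Q x) (sylvOp A y) := tinner_sylvOpT' A _ _
      _ = tinner x (precondOp Q (sylvOp A y)) := tinner_precondOpT' Q _ _
  -- the bi-orthogonality relations
  have main := bicor_arith
    (fun i j => tinner (T.Rs i) ((precondOp Q ∘ sylvOp A) (T.R j)))
    (fun i j => tinner ((sylvOpT A ∘ precondOpT Q) (T.Ps i))
      ((precondOp Q ∘ sylvOp A) (T.P j)))
    (fun i j => tinner ((sylvOpT A ∘ precondOpT Q) (T.Rs i))
      ((precondOp Q ∘ sylvOp A) (T.P j)))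
    (fun i j => tinner ((sylvOpT A ∘ precondOpT Q) (T.Ps i))
      ((precondOp Q ∘ sylvOp A) (T.R j)))
    T.a T.b M0
    (by -- h1
      intro i j hj
      rw [T.hR j hj, hLsub, tinner_sub_right', tinner_smul_right', ← hadj _ ((precondOp Q ∘ sylvOp A) (T.P j))])
    (by -- h2
      intro i j hi
      rw [T.hRs i hi, tinner_sub_left', tinner_smul_left'])
    (by -- h3
      intro j
      rw [T.hPs0])
    (by -- h4
      intro i j hi
      rw [T.hPs i hi, hTadd, tinner_add_left', tinner_smul_left']
      ring)
    (by -- h5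
      intro i
      rw [T.hP0])
    (by -- h6
      intro i j hj
      rw [T.hP j hj, hLadd, tinner_add_right', tinner_smul_right']
      ring)
    (by -- h9
      intro n hn
      rw [T.ha n hn]
      exact div_mul_cancel₀ _ (hnb2 n hn))
    (by -- h10
      intro n hn
      rw [T.hb n hn, div_mul_cancel₀ _ (hnb1 n hn)])
    (by -- h11
      intro n hn
      rw [T.ha n hn]
      exact div_ne_zero (hnb1 n hn) (hnb2 n hn))
  have Forth : ∀ i j : ℕ, i ≤ M0 → j ≤ M0 → i ≠ j →
      tinner (T.Rs i) ((precondOp Q ∘ sylvOp A) (T.R j)) = 0 :=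
    fun i j hi hj hij => (main M0 le_rfl i j hi hj hij).1
  -- dimension count
  have hM0pos : 0 < M0 := by
    rw [hM0]; exact Finset.prod_pos (fun n _ => hI n)
  have hne : Nonempty (Fin M0) := ⟨⟨0, hM0pos⟩⟩
  set w : Fin M0 → Tensor I :=
    fun i => (sylvOpT A ∘ precondOpT Q) (T.Rs i) with hw
  have hwR : ∀ (i : Fin M0) (j : ℕ),
      tinner (w i) (T.R j) = tinner (T.Rs i) ((precondOp Q ∘ sylvOp A) (T.R j)) :=
    fun i j => hadj _ _
  have hindep : LinearIndependent ℝ w := by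
    rw [Fintype.linearIndependent_iff]
    intro g hg j
    have h0 : tinner (∑ i, g i • w i) (T.R j) = 0 := by
      rw [hg]; simp [tinner]
    rw [tinner_sum_left'] at h0
    have h1 : ∑ i, g i * tinner (w i) (T.R (j : ℕ)) = 0 := by
      simpa [tinner_smul_left'] using h0
    have h2 : ∑ i : Fin M0, g i * tinner (w i) (T.R (j : ℕ))
        = g j * tinner (w j) (T.R (j : ℕ)) := by
      refine Finset.sum_eq_single j ?_ (by simp)
      intro i _ hij
      rw [hwR, Forth i j (le_of_lt i.isLt) (le_of_lt j.isLt)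
        (fun h => hij (Fin.ext h)), mul_zero]
    have h3 : tinner (w j) (T.R (j : ℕ)) ≠ 0 := by
      rw [hwR]; exact hnb1 j j.isLt
    have h4 := h1
    rw [h2] at h4
    exact (mul_eq_zero.mp h4).resolve_right h3
  have hcard : Fintype.card (Fin M0) = Module.finrank ℝ (Tensor I) := by
    rw [Fintype.card_fin, Module.finrank_fintype_fun_eq_card, Fintype.card_pi]
    simp [hM0]
  have hspan := hindep.span_eq_top_of_card_eq_finrank hcard
  -- the linear functional `x ↦ ⟨x, R_{M₀}⟩`
  let φ : Tensor I →ₗ[ℝ] ℝ :=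
    { toFun := fun x => tinner x (T.R M0)
      map_add' := fun x y => tinner_add_left' x y _
      map_smul' := fun c x => by simpa using tinner_smul_left' c x _ }
  have hker : Submodule.span ℝ (Set.range w) ≤ LinearMap.ker φ := by
    rw [Submodule.span_le]
    rintro _ ⟨i, rfl⟩
    have : tinner (w i) (T.R M0) = 0 := by
      rw [hwR]
      exact Forth i M0 (le_of_lt i.isLt) le_rfl (Nat.ne_of_lt i.isLt)
    simpa [LinearMap.mem_ker, φ] using this
  have hRM0 : tinner (T.R M0) (T.R M0) = 0 := by
    have hmem : T.R M0 ∈ LinearMap.ker φ := hker (hspan ▸ Submodule.mem_top)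
    simpa [φ, LinearMap.mem_ker] using hmem
  have hRzero : T.R M0 = 0 := tinner_self_eq_zero' hRM0
  -- residual identity
  have hres : ∀ n, n ≤ M0 →
      T.R n = precondOp Q D - (precondOp Q ∘ sylvOp A) (T.X n) := by
    intro n
    induction n with
    | zero => intro _; rw [T.hR0, T.hX0]
    | succ n IH =>
      intro hn
      have hnk : n < M0 := hn
      rw [T.hR n hnk, T.hX n hnk, IH (by omega), hLadd (T.a n) (T.X n) (T.P n)]
      abel
  have hLX : (precondOp Q ∘ sylvOp A) (T.X M0) = precondOp Q D := by
    have h := hres M0 le_rfl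
    rw [hRzero] at h
    have := sub_eq_zero.mp h.symm
    exact this.symm
  exact ⟨hRzero, hLX, precondOp_injective Q hQ hLX⟩
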